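/- arXiv:0907.5596 — 2 statements merged into one kernel-verified Lean document; each statement's English description precedes it below -/
import Mathlib

section
/- Fix 0 < y ≤ 2. For all x with 0 < x ≤ (π/2)², the function Ψ(x,y) = (1/√x)·arcsin((y/2)·sin(√x)) satisfies Ψ(x,y) ≥ Ψ((π/2)², y) = (2/π)·arcsin(y/2). -/
/-!
With `t = √x` and `a = y / 2 ∈ (0, 1]`, `Ψ(x, y) = f t / t` for `f t = arcsin (a * sin t)`.
This `f` vanishes at `0` and is concave on `[0, π/2]`, because
`f'' t = a (a² - 1) sin t / (1 - a² sin² t)^{3/2} ≤ 0`. Hence the slope `f t / t` of the chord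
from the origin decreases in `t`, so it is smallest at `t = π/2`, where it equals `(2/π) arcsin a`.
-/

open Real Set

theorem ConcaveOn.div_le_div_of_map_zero {s : Set ℝ} {f : ℝ → ℝ} (hf : ConcaveOn ℝ s f)
    (h0 : 0 ∈ s) (hf0 : f 0 = 0) {x y : ℝ} (hx : x ∈ s) (hy : y ∈ s) (hx0 : x ≠ 0)
    (hy0 : y ≠ 0) (hxy : x ≤ y) : f y / y ≤ f x / x := by
  have := hf.neg.secant_mono h0 hx hy hx0 hy0 hxy
  simp only [Pi.neg_apply, hf0, neg_zero, sub_zero, neg_div] at this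
  linarith

section ArcsinMulSin

variable {a t : ℝ}

theorem hasDerivAt_arcsin_mul_sin (h : (a * sin t) ^ 2 < 1) :
    HasDerivAt (fun t => arcsin (a * sin t)) (a * cos t / √(1 - (a * sin t) ^ 2)) t := by
  obtain ⟨h₁, h₂⟩ := abs_lt.mp ((sq_lt_one_iff_abs_lt_one _).mp h)
  refine ((hasDerivAt_arcsin h₁.ne' h₂.ne).comp t ((hasDerivAt_sin t).const_mul a)).congr_deriv ?_
  ring

theorem hasDerivAt_mul_cos_div_sqrt (h : (a * sin t) ^ 2 < 1) :
    HasDerivAt (fun t => a * cos t / √(1 - (a * sin t) ^ 2))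
      (a * sin t * (a ^ 2 - 1) / ((1 - (a * sin t) ^ 2) * √(1 - (a * sin t) ^ 2))) t := by
  have hu : 0 < 1 - (a * sin t) ^ 2 := by linarith
  have hsqrt := ((((hasDerivAt_sin t).const_mul a).pow 2).const_sub 1).sqrt hu.ne'
  refine (((hasDerivAt_cos t).const_mul a).div hsqrt (sqrt_pos.2 hu).ne').congr_deriv ?_
  simp only [Pi.pow_apply, Nat.cast_ofNat, pow_one, Nat.add_one_sub_one]
  have hs := sq_sqrt hu.le
  have hs₀ := (sqrt_pos.2 hu).ne'
  generalize √(1 - (a * sin t) ^ 2) = s at hs hs₀ ⊢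
  rw [← hs]
  field_simp
  linear_combination (-a * sin t) * hs + a ^ 3 * sin t * sin_sq_add_cos_sq t

theorem concaveOn_arcsin_mul_sin (ha₀ : 0 ≤ a) (ha₁ : a ≤ 1) :
    ConcaveOn ℝ (Icc 0 (π / 2)) (fun t => arcsin (a * sin t)) := by
  have hsin : ∀ t ∈ interior (Icc 0 (π / 2)), 0 < sin t ∧ (a * sin t) ^ 2 < 1 := by
    intro t ht
    rw [interior_Icc] at ht
    have hsin₀ : 0 < sin t := sin_pos_of_pos_of_lt_pi ht.1 (by linarith [ht.2, pi_pos])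
    have hcos₀ : 0 < cos t := cos_pos_of_mem_Ioo ⟨by linarith [ht.1, pi_pos], ht.2⟩
    refine ⟨hsin₀, ?_⟩
    have : a * sin t ≤ sin t := mul_le_of_le_one_left hsin₀.le ha₁
    nlinarith [sin_sq_add_cos_sq t, mul_pos hcos₀ hcos₀, mul_nonneg ha₀ hsin₀.le]
  refine concaveOn_of_hasDerivWithinAt2_nonpos (convex_Icc _ _) (by fun_prop)
    (fun t ht => (hasDerivAt_arcsin_mul_sin (hsin t ht).2).hasDerivWithinAt)
    (fun t ht => (hasDerivAt_mul_cos_div_sqrt (hsin t ht).2).hasDerivWithinAt) fun t ht => ?_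
  obtain ⟨hsin₀, hlt⟩ := hsin t ht
  have hu : 0 < 1 - (a * sin t) ^ 2 := by linarith
  refine div_nonpos_of_nonpos_of_nonneg ?_ (by positivity)
  exact mul_nonpos_of_nonneg_of_nonpos (by positivity) (by nlinarith)

end ArcsinMulSin

theorem Psi_lower_bound (y : ℝ) (hy0 : 0 < y) (hy2 : y ≤ 2)
    (x : ℝ) (hx0 : 0 < x) (hx : x ≤ (π / 2) ^ 2) :
    (1 / Real.sqrt x) * Real.arcsin ((y / 2) * Real.sin (Real.sqrt x)) ≥
      (2 / π) * Real.arcsin (y / 2) ∧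
    (1 / Real.sqrt ((π / 2) ^ 2)) * Real.arcsin ((y / 2) * Real.sin (Real.sqrt ((π / 2) ^ 2))) =
      (2 / π) * Real.arcsin (y / 2) := by
  have hπ : 0 < π / 2 := by positivity
  have hsqrt : √((π / 2) ^ 2) = π / 2 := sqrt_sq hπ.le
  have hend : 1 / (π / 2) * arcsin (y / 2 * sin (π / 2)) = 2 / π * arcsin (y / 2) := by
    rw [sin_pi_div_two, mul_one, one_div_div]
  refine ⟨?_, by rw [hsqrt, hend]⟩
  have ht : √x ≤ π / 2 := hsqrt ▸ sqrt_le_sqrt hx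
  rw [ge_iff_le, ← hend, one_div_mul_eq_div, one_div_mul_eq_div]
  exact (concaveOn_arcsin_mul_sin (by linarith) (by linarith)).div_le_div_of_map_zero
    ⟨le_rfl, hπ.le⟩ (by simp) ⟨sqrt_nonneg x, ht⟩ ⟨hπ.le, le_rfl⟩ (sqrt_pos.2 hx0).ne' hπ.ne' ht
end

section
/- Let 1/2 < α < 1 and let k1, k2 > 0 with k1 + k2 = 1. Then (1 − k1^(2α) − k2^(2α)) / (2 k1^α k2^α) ≤ 2^(2α−1) − 1, so the comparison angle satisfies arccos of the left side ≥ arccos(2^(2α−1) − 1). -/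
/-! With `p = 2α ∈ (1, 2)` and `k₁ + k₂ = 1`, the claim is the two-term inequality
`(x + y)^p ≤ x^p + y^p + (2^p - 2) (x y)^(p/2)`, with equality at `x = y`. By homogeneity it
reduces to `y = 1`, `x = t ∈ (0, 1]`, where it says that `((1 + t)^p - 1 - t^p) / t^(p/2)` is
largest at `t = 1`. That function is monotone on `(0, 1]`: the sign of its derivative is that of
`(1 + t)(1 - t^p) - (1 - t)(1 + t)^p`, which is nonnegative by Bernoulli's inequality for the
exponent `p - 1 ∈ [0, 1]`. -/

open Real Set

section

variable {p t : ℝ}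

theorem one_sub_mul_one_add_rpow_le (hp1 : 1 ≤ p) (hp2 : p ≤ 2) (ht0 : 0 ≤ t) (ht1 : t ≤ 1) :
    (1 - t) * (1 + t) ^ p ≤ (1 + t) * (1 - t ^ p) := by
  have hq0 : 0 ≤ p - 1 := by linarith
  have hq1 : p - 1 ≤ 1 := by linarith
  have hbern₁ : (1 + t) ^ (p - 1) ≤ 1 + (p - 1) * t :=
    rpow_one_add_le_one_add_mul_self (by linarith) hq0 hq1
  have hbern₂ : t ^ (p - 1) ≤ 1 + (p - 1) * (t - 1) := by
    simpa using rpow_one_add_le_one_add_mul_self (s := t - 1) (by linarith) hq0 hq1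
  have hsplit₁ : (1 + t) ^ p = (1 + t) * (1 + t) ^ (p - 1) := by
    rw [← rpow_one_add' (by linarith) (by linarith)]; ring_nf
  have hsplit₂ : t ^ p = t * t ^ (p - 1) := by
    rw [← rpow_one_add' ht0 (by linarith)]; ring_nf
  rw [hsplit₁, hsplit₂]
  -- after both Bernoulli bounds, each side becomes `(1 - t) (1 + t) (1 + (p - 1) t)`
  have h₁ := mul_le_mul_of_nonneg_left hbern₁ (by nlinarith : 0 ≤ (1 - t) * (1 + t))
  have h₂ := mul_le_mul_of_nonneg_left hbern₂ (by nlinarith : 0 ≤ (1 + t) * t)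
  nlinarith

noncomputable def rpowDefect (p t : ℝ) : ℝ := ((1 + t) ^ p - 1 - t ^ p) * t ^ (-(p / 2))

theorem hasDerivAt_rpowDefect (ht : 0 < t) :
    HasDerivAt (rpowDefect p)
      (p / (2 * t * (1 + t)) * t ^ (-(p / 2)) * ((1 + t) * (1 - t ^ p) - (1 - t) * (1 + t) ^ p))
      t := by
  have h₁ : HasDerivAt (fun s : ℝ => (1 + s) ^ p) (1 * p * (1 + t) ^ (p - 1)) t :=
    ((hasDerivAt_id t).const_add 1).rpow_const (Or.inl (by positivity))
  have h₂ : HasDerivAt (fun s : ℝ => s ^ p) (p * t ^ (p - 1)) t :=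
    hasDerivAt_rpow_const (Or.inl ht.ne')
  have h₃ : HasDerivAt (fun s : ℝ => s ^ (-(p / 2))) (-(p / 2) * t ^ (-(p / 2) - 1)) t :=
    hasDerivAt_rpow_const (Or.inl ht.ne')
  refine (((h₁.sub_const 1).sub h₂).mul h₃).congr_deriv ?_
  simp only [Pi.sub_apply]
  rw [rpow_sub_one (by positivity), rpow_sub_one ht.ne', rpow_sub_one ht.ne']
  field_simp
  ring

theorem rpowDefect_monotoneOn (hp1 : 1 ≤ p) (hp2 : p ≤ 2) :
    MonotoneOn (rpowDefect p) (Ioc 0 1) := by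
  have hderiv : ∀ t ∈ Ioc (0 : ℝ) 1, HasDerivAt (rpowDefect p) _ t :=
    fun t ht => hasDerivAt_rpowDefect ht.1
  refine monotoneOn_of_deriv_nonneg (convex_Ioc 0 1)
    (fun t ht => (hderiv t ht).continuousAt.continuousWithinAt) ?_ ?_
  · rw [interior_Ioc]
    exact fun t ht => (hderiv t (Ioo_subset_Ioc_self ht)).differentiableAt.differentiableWithinAt
  · rw [interior_Ioc]
    intro t ht
    rw [(hderiv t (Ioo_subset_Ioc_self ht)).deriv]
    have hp : 0 < p := by linarith
    have ht0 := ht.1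
    exact mul_nonneg (by positivity)
      (sub_nonneg.2 (one_sub_mul_one_add_rpow_le hp1 hp2 ht0.le ht.2.le))

theorem one_add_rpow_le (hp1 : 1 ≤ p) (hp2 : p ≤ 2) (ht0 : 0 < t) (ht1 : t ≤ 1) :
    (1 + t) ^ p ≤ 1 + t ^ p + (2 ^ p - 2) * t ^ (p / 2) := by
  have hmono : rpowDefect p t ≤ rpowDefect p 1 :=
    rpowDefect_monotoneOn hp1 hp2 ⟨ht0, ht1⟩ ⟨one_pos, le_rfl⟩ ht1
  have hone : rpowDefect p 1 = 2 ^ p - 2 := by norm_num [rpowDefect]; ring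
  have hcancel : t ^ (-(p / 2)) * t ^ (p / 2) = 1 := by
    rw [← rpow_add ht0, neg_add_cancel, rpow_zero]
  have := mul_le_mul_of_nonneg_right (hone ▸ hmono) (rpow_pos_of_pos ht0 (p / 2)).le
  rw [rpowDefect, mul_assoc, hcancel, mul_one] at this
  linarith

end

theorem add_rpow_le_rpow_add_rpow_add_mul_rpow {p x y : ℝ} (hp1 : 1 ≤ p) (hp2 : p ≤ 2)
    (hx : 0 < x) (hy : 0 < y) :
    (x + y) ^ p ≤ x ^ p + y ^ p + (2 ^ p - 2) * (x * y) ^ (p / 2) := by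
  wlog hxy : x ≤ y generalizing x y
  · have := this hy hx (by linarith)
    rwa [add_comm y, add_comm (y ^ p), mul_comm y] at this
  have ht0 : 0 < x / y := div_pos hx hy
  have key := mul_le_mul_of_nonneg_right (one_add_rpow_le hp1 hp2 ht0 ((div_le_one hy).2 hxy))
    (rpow_pos_of_pos hy p).le
  have e₁ : (1 + x / y) ^ p * y ^ p = (x + y) ^ p := by
    rw [← mul_rpow (by positivity) hy.le]; congr 1; field_simp; ring
  have e₂ : (x / y) ^ p * y ^ p = x ^ p := by
    rw [← mul_rpow ht0.le hy.le]; congr 1; field_simp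
  have e₃ : (x / y) ^ (p / 2) * y ^ p = (x * y) ^ (p / 2) := by
    have hsq : (y * y) ^ (p / 2) = y ^ p := by
      rw [mul_rpow hy.le hy.le, ← rpow_add hy, add_halves]
    rw [← hsq, ← mul_rpow ht0.le (by positivity)]
    congr 1; field_simp
  calc (x + y) ^ p = (1 + x / y) ^ p * y ^ p := e₁.symm
    _ ≤ (1 + (x / y) ^ p + (2 ^ p - 2) * (x / y) ^ (p / 2)) * y ^ p := key
    _ = x ^ p + y ^ p + (2 ^ p - 2) * (x * y) ^ (p / 2) := by rw [← e₂, ← e₃]; ring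

theorem comparison_angle_bound_of_alpha_gt_half (α k1 k2 : ℝ) (hα0 : 1/2 < α) (hα : α < 1)
    (hk1 : 0 < k1) (hk2 : 0 < k2) (hsum : k1 + k2 = 1) :
    (1 - k1 ^ (2 * α) - k2 ^ (2 * α)) / (2 * k1 ^ α * k2 ^ α) ≤ (2:ℝ) ^ (2 * α - 1) - 1 ∧
    Real.arccos ((1 - k1 ^ (2 * α) - k2 ^ (2 * α)) / (2 * k1 ^ α * k2 ^ α)) ≥
      Real.arccos ((2:ℝ) ^ (2 * α - 1) - 1) := by
  have key := add_rpow_le_rpow_add_rpow_add_mul_rpow (p := 2 * α) (by linarith) (by linarith)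
    hk1 hk2
  rw [hsum, one_rpow, mul_rpow hk1.le hk2.le, mul_div_cancel_left₀ α two_ne_zero] at key
  have hpos : 0 < 2 * k1 ^ α * k2 ^ α := by positivity
  have hbound : (1 - k1 ^ (2 * α) - k2 ^ (2 * α)) / (2 * k1 ^ α * k2 ^ α) ≤
      (2:ℝ) ^ (2 * α - 1) - 1 := by
    rw [div_le_iff₀ hpos, rpow_sub two_pos, rpow_one]
    linarith
  exact ⟨hbound, arccos_le_arccos hbound⟩
end
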